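/- arXiv:1603.01288 — 2 statements merged into one kernel-verified Lean document; each statement's English description precedes it below -/
import Mathlib

section
/- Let X be an order complete vector lattice with the countable sup property. If a net (y_α) in X order-converges to x ∈ X and is order bounded, then there exists an increasing sequence of indices (α_n) such that the sequence (y_{α_n}) order-converges to x. -/
open Filter

universe u

/-- Order convergence of a net in a vector lattice: there is a net decreasing to `0`
(antitone with infimum `0`) eventually dominating `|y α - x|`. -/
def OrderConvNet {X : Type u} [Lattice X] [AddCommGroup X] {ι : Type*} [Preorder ι]
    (y : ι → X) (x : X) : Prop :=
  ∃ z : ι → X, Antitone z ∧ IsGLB (Set.range z) 0 ∧ ∀ᶠ a in atTop, |y a - x| ≤ z a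

/-- A subset is order closed if it contains the order limit of every net of its elements. -/
def OrderClosedSet {X : Type u} [Lattice X] [AddCommGroup X] (A : Set X) : Prop :=
  ∀ (ι : Type u) (_ : Preorder ι) (_ : IsDirected ι (· ≤ ·)) (_ : Nonempty ι)
    (y : ι → X) (x : X), (∀ a, y a ∈ A) → OrderConvNet y x → x ∈ A

/-!
Let `z` be the net decreasing to `0` that witnesses `y →o x`. The countable sup property,
transported to infima by negation, picks countably many `z (a n)` whose infimum is still `0`.
Choosing increasing indices `α n` past the point where `|y - x| ≤ z` holds and past every `a n`,
the sequence `z (α n)` is decreasing, is squeezed between `0` and `z (a n)`, and therefore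
witnesses `y (α n) →o x`.
-/

open Set

theorem exists_countable_isGLB_of_countable_isLUB {X : Type*} [AddCommGroup X] [Preorder X]
    [CovariantClass X X (· + ·) (· ≤ ·)]
    (hcsp : ∀ (S : Set X) (x : X), IsLUB S x → ∃ T ⊆ S, T.Countable ∧ IsLUB T x)
    {S : Set X} {x : X} (h : IsGLB S x) : ∃ T ⊆ S, T.Countable ∧ IsGLB T x := by
  obtain ⟨T, hTS, hT, hTx⟩ := hcsp (-S) (-x) h.neg
  refine ⟨-T, neg_subset.2 hTS, ?_, isGLB_neg.2 hTx⟩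
  simpa only [image_neg_eq_neg] using hT.image (fun t => -t)

theorem exists_seq_isGLB_range_comp {X ι : Type*} [Preorder X] [Nonempty ι]
    (hcip : ∀ (S : Set X) (x : X), IsGLB S x → ∃ T ⊆ S, T.Countable ∧ IsGLB T x)
    {z : ι → X} {x : X} (h : IsGLB (range z) x) : ∃ a : ℕ → ι, IsGLB (range (z ∘ a)) x := by
  obtain ⟨T, hTS, hT, hTx⟩ := hcip _ _ h
  choose g hg using fun t : T => hTS t.2
  have := hT.to_subtype
  obtain ⟨a, ha⟩ := countable_iff_exists_subset_range.1 (countable_range g)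
  refine ⟨a, hTx.of_subset_of_superset h ?_ (range_comp_subset_range a z)⟩
  intro t ht
  obtain ⟨n, hn⟩ := ha ⟨⟨t, ht⟩, rfl⟩
  exact ⟨n, by rw [Function.comp_apply, hn, hg]⟩

theorem exists_monotone_seq_ge {ι : Type*} [Preorder ι] [IsDirected ι (· ≤ ·)]
    (a : ℕ → ι) (i₀ : ι) : ∃ α : ℕ → ι, Monotone α ∧ i₀ ≤ α 0 ∧ ∀ n, a n ≤ α n := by
  choose ub hub₁ hub₂ using exists_ge_ge (α := ι)
  let α : ℕ → ι := fun n => Nat.rec (ub i₀ (a 0)) (fun m αm => ub αm (a (m + 1))) n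
  refine ⟨α, monotone_nat_of_le_succ fun m => hub₁ _ _, hub₁ _ _, ?_⟩
  rintro (_ | n)
  exacts [hub₂ _ _, hub₂ _ _]

theorem isGLB_range_comp_of_le {X ι κ : Type*} [Preorder X] [Preorder ι] {z : ι → X}
    (hz : Antitone z) {x : X} (hx : x ∈ lowerBounds (range z)) {a α : κ → ι}
    (ha : IsGLB (range (z ∘ a)) x) (hle : ∀ n, a n ≤ α n) : IsGLB (range (z ∘ α)) x :=
  ⟨forall_mem_range.2 fun n => hx ⟨α n, rfl⟩,
    fun _ hb => ha.2 (forall_mem_range.2 fun n => (hb ⟨n, rfl⟩).trans (hz (hle n)))⟩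

theorem OrderConvNet.exists_monotone_seq {X : Type u} [Lattice X] [AddCommGroup X]
    (hcip : ∀ (S : Set X) (x : X), IsGLB S x → ∃ T ⊆ S, T.Countable ∧ IsGLB T x)
    {ι : Type*} [Preorder ι] [Nonempty ι] [IsDirected ι (· ≤ ·)] {y : ι → X} {x : X}
    (h : OrderConvNet y x) : ∃ α : ℕ → ι, Monotone α ∧ OrderConvNet (fun n => y (α n)) x := by
  obtain ⟨z, hz, hz_glb, hyz⟩ := h
  obtain ⟨i₀, hi₀⟩ := eventually_atTop.1 hyz
  obtain ⟨a, ha⟩ := exists_seq_isGLB_range_comp hcip hz_glb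
  obtain ⟨α, hα, hi₀α, haα⟩ := exists_monotone_seq_ge a i₀
  exact ⟨α, hα, z ∘ α, hz.comp_monotone hα, isGLB_range_comp_of_le hz hz_glb.1 ha haα,
    Eventually.of_forall fun n => hi₀ _ (hi₀α.trans (hα n.zero_le))⟩

theorem exists_monotone_subsequence_orderConv_general
    {X : Type u} [Lattice X] [AddCommGroup X]
    [CovariantClass X X (· + ·) (· ≤ ·)]
    (hcsp : ∀ (S : Set X) (x : X), IsLUB S x → ∃ T ⊆ S, T.Countable ∧ IsLUB T x)
    (ι : Type u) [Preorder ι] [Nonempty ι] [IsDirected ι (· ≤ ·)]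
    (y : ι → X) (x : X)
    (hconv : OrderConvNet y x) :
    ∃ α : ℕ → ι, Monotone α ∧ OrderConvNet (fun n => y (α n)) x :=
  hconv.exists_monotone_seq fun _ _ h => exists_countable_isGLB_of_countable_isLUB hcsp h

/-- In an order complete vector lattice with the countable sup property, every
order bounded net order-converging to `x` admits an increasing sequence of indices along
which it order-converges (as a sequence) to `x`. -/
theorem exists_monotone_subsequence_orderConv
    {X : Type u} [Lattice X] [AddCommGroup X] [Module ℝ X]
    [CovariantClass X X (· + ·) (· ≤ ·)]
    (hoc : ∀ S : Set X, S.Nonempty → BddAbove S → ∃ x, IsLUB S x)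
    (hcsp : ∀ (S : Set X) (x : X), IsLUB S x → ∃ T ⊆ S, T.Countable ∧ IsLUB T x)
    (ι : Type u) [Preorder ι] [Nonempty ι] [IsDirected ι (· ≤ ·)]
    (y : ι → X) (x : X)
    (hbdd : BddAbove (Set.range y) ∧ BddBelow (Set.range y))
    (hconv : OrderConvNet y x) :
    ∃ α : ℕ → ι, Monotone α ∧ OrderConvNet (fun n => y (α n)) x :=
  exists_monotone_subsequence_orderConv_general hcsp ι y x hconv
end

section
/- Let X be an ideal of L⁰(Ω, Σ, ℙ) and Y an order closed sublattice of X containing the constant function 1. Then every f ∈ Y is measurable with respect to the σ-algebra G = {A ∈ Σ : χ_A ∈ Y}; in particular, for each real r the set {f > r} belongs to G. -/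
open MeasureTheory Filter

universe u

variable {Ω : Type u}

/-- An ideal (solid subspace) of `L⁰`. -/
def IsIdealL0 {m0 : MeasurableSpace Ω} {μ : Measure Ω} (X : Submodule ℝ (Ω →ₘ[μ] ℝ)) : Prop :=
  ∀ x y : Ω →ₘ[μ] ℝ, |x| ≤ |y| → y ∈ X → x ∈ X

/-- Order convergence of a net `y` to `x` within the subspace `X` of `L⁰`: there is a net
`z` in `X`, antitone, with infimum `0` relative to `X`, eventually dominating `|y a - x|`. -/
def OrderConvNetIn {m0 : MeasurableSpace Ω} {μ : Measure Ω} (X : Submodule ℝ (Ω →ₘ[μ] ℝ))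
    {ι : Type*} [Preorder ι] (y : ι → (Ω →ₘ[μ] ℝ)) (x : Ω →ₘ[μ] ℝ) : Prop :=
  ∃ z : ι → (Ω →ₘ[μ] ℝ), (∀ a, z a ∈ X) ∧ Antitone z ∧ (∀ a, 0 ≤ z a) ∧
    (∀ h ∈ X, (∀ a, h ≤ z a) → h ≤ 0) ∧ ∀ᶠ a in atTop, |y a - x| ≤ z a

/-- A subset `Y` of `X ⊆ L⁰` is order closed in `X` if it contains the limit of any net of
its elements order-converging (within `X`) to an element of `X`. -/
def OrderClosedIn {m0 : MeasurableSpace Ω} {μ : Measure Ω} (X : Submodule ℝ (Ω →ₘ[μ] ℝ))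
    (Y : Set (Ω →ₘ[μ] ℝ)) : Prop :=
  ∀ (ι : Type u) (_ : Preorder ι) (_ : IsDirected ι (· ≤ ·)) (_ : Nonempty ι)
    (y : ι → (Ω →ₘ[μ] ℝ)) (x : Ω →ₘ[μ] ℝ),
    (∀ a, y a ∈ Y) → x ∈ X → OrderConvNetIn X y x → x ∈ Y

/-- The indicator of a measurable set, as an element of `L⁰`. -/
noncomputable def chiL0 {m0 : MeasurableSpace Ω} (μ : Measure Ω) (A : Set Ω)
    (hA : MeasurableSet A) : Ω →ₘ[μ] ℝ :=
  AEEqFun.mk (A.indicator fun _ => (1 : ℝ))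
    ((measurable_const.indicator hA).aestronglyMeasurable)

/-!
Since `Y` is a vector sublattice containing `1` (`a ⊔ b = ½ (a + b + |b - a|)`), it contains the
ramps `gₙ = n (f - r)⁺ ∧ 1`. These increase a.e. to `χ_{f > r}`, which lies in the ideal `X`
because `0 ≤ χ_{f > r} ≤ 1`. An increasing sequence converging a.e. converges in order within
`X`, dominated by `χ_{f > r} - gₙ`, so order closedness puts `χ_{f > r}` in `Y`. The sets
`{f > r}` then generate the measurability of `f` with respect to `G`.
-/

open Topology

namespace MeasureTheory.AEEqFun

instance instIsOrderedAddMonoid {α β : Type*} [MeasurableSpace α] {μ : Measure α}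
    [TopologicalSpace β] [AddCommMonoid β] [PartialOrder β] [IsOrderedAddMonoid β]
    [ContinuousAdd β] : IsOrderedAddMonoid (α →ₘ[μ] β) where
  add_le_add_left f g hfg h := by
    rw [← coeFn_le] at hfg ⊢
    filter_upwards [hfg, coeFn_add f h, coeFn_add g h] with ω hω hf hg
    simpa only [hf, hg, Pi.add_apply] using add_le_add_left hω (h ω)

end MeasureTheory.AEEqFun

namespace Submodule

variable {𝕜 M : Type*} [DivisionRing 𝕜] [NeZero (2 : 𝕜)] [Lattice M] [AddCommGroup M]
  [Module 𝕜 M] [IsOrderedAddMonoid M] (p : Submodule 𝕜 M) (habs : ∀ x ∈ p, |x| ∈ p)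
  {x y : M}

include habs in
theorem sup_mem_of_forall_abs_mem (hx : x ∈ p) (hy : y ∈ p) : x ⊔ y ∈ p := by
  rw [sup_eq_half_smul_add_add_abs_sub' 𝕜]
  exact p.smul_mem _ (p.add_mem (p.add_mem hx hy) (habs _ (p.sub_mem hy hx)))

include habs in
theorem inf_mem_of_forall_abs_mem (hx : x ∈ p) (hy : y ∈ p) : x ⊓ y ∈ p := by
  rw [inf_eq_half_smul_add_sub_abs_sub' 𝕜]
  exact p.smul_mem _ (p.sub_mem (p.add_mem hx hy) (habs _ (p.sub_mem hy hx)))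

end Submodule

theorem tendsto_min_natCast_mul_max_zero_one (t : ℝ) :
    Tendsto (fun n : ℕ => min (n * max t 0) 1) atTop (𝓝 (if 0 < t then 1 else 0)) := by
  by_cases ht : 0 < t
  · rw [if_pos ht]
    refine tendsto_const_nhds.congr' ?_
    filter_upwards [eventually_ge_atTop ⌈t⁻¹⌉₊] with n hn
    have : 1 ≤ n * t := by
      rw [← inv_le_iff_one_le_mul₀ ht]
      exact (Nat.le_ceil _).trans (Nat.cast_le.2 hn)
    rw [max_eq_left ht.le, min_eq_right this]
  · simp [if_neg ht, max_eq_right (not_lt.1 ht)]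

section L0

variable {m0 : MeasurableSpace Ω} {μ : Measure Ω}

theorem coeFn_chiL0 (A : Set Ω) (hA : MeasurableSet A) :
    chiL0 μ A hA =ᵐ[μ] A.indicator 1 :=
  AEEqFun.coeFn_mk _ _

theorem IsIdealL0.chiL0_mem {X : Submodule ℝ (Ω →ₘ[μ] ℝ)} (hX : IsIdealL0 X)
    (h1 : (1 : Ω →ₘ[μ] ℝ) ∈ X) (A : Set Ω) (hA : MeasurableSet A) : chiL0 μ A hA ∈ X := by
  refine hX _ 1 ?_ h1
  rw [← AEEqFun.coeFn_le]
  filter_upwards [AEEqFun.coeFn_abs (chiL0 μ A hA), AEEqFun.coeFn_abs (1 : Ω →ₘ[μ] ℝ),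
    coeFn_chiL0 A hA, AEEqFun.coeFn_one (β := ℝ)] with ω habs habs1 hχ h1
  rw [habs, habs1, hχ, h1]
  by_cases hω : ω ∈ A <;> simp [hω]

theorem le_of_monotone_of_ae_tendsto {g : ℕ → Ω →ₘ[μ] ℝ} {x : Ω →ₘ[μ] ℝ} (hmono : Monotone g)
    (hlim : ∀ᵐ ω ∂μ, Tendsto (fun n => g n ω) atTop (𝓝 (x ω))) (n : ℕ) : g n ≤ x := by
  have hmono_ae : ∀ᵐ ω ∂μ, Monotone fun n => g n ω := by
    have := ae_all_iff.2 fun n : ℕ => AEEqFun.coeFn_le.2 (hmono n.le_succ)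
    filter_upwards [this] with ω hω
    exact monotone_nat_of_le_succ hω
  rw [← AEEqFun.coeFn_le]
  filter_upwards [hmono_ae, hlim] with ω hω hωlim
  exact hω.ge_of_tendsto hωlim n

variable {X : Submodule ℝ (Ω →ₘ[μ] ℝ)}

theorem orderConvNetIn_of_monotone_of_ae_tendsto {g : ℕ → Ω →ₘ[μ] ℝ} {x : Ω →ₘ[μ] ℝ}
    (hg : ∀ n, g n ∈ X) (hx : x ∈ X) (hmono : Monotone g)
    (hlim : ∀ᵐ ω ∂μ, Tendsto (fun n => g n ω) atTop (𝓝 (x ω))) :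
    OrderConvNetIn X (fun n : ULift ℕ => g n.down) x := by
  have hle := le_of_monotone_of_ae_tendsto hmono hlim
  refine ⟨fun n => x - g n.down, fun n => X.sub_mem hx (hg n.down),
    fun n m hnm => sub_le_sub_left (hmono hnm) x, fun n => sub_nonneg.2 (hle n.down), ?_,
    Eventually.of_forall fun n => by rw [abs_sub_comm, abs_of_nonneg (sub_nonneg.2 (hle n.down))]⟩
  intro h _ hh
  have hh_ae : ∀ᵐ ω ∂μ, ∀ n : ℕ, h ω ≤ x ω - g n ω := by
    refine ae_all_iff.2 fun n => ?_
    filter_upwards [AEEqFun.coeFn_le.2 (hh ⟨n⟩), AEEqFun.coeFn_sub x (g n)] with ω hω hsub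
    rwa [hsub] at hω
  rw [← AEEqFun.coeFn_le]
  filter_upwards [hh_ae, hlim, AEEqFun.coeFn_zero (β := ℝ)] with ω hω hωlim h0
  rw [h0]
  exact ge_of_tendsto (by simpa using (tendsto_const_nhds (x := x ω)).sub hωlim)
    (Eventually.of_forall hω)

theorem OrderClosedIn.mem_of_monotone_of_ae_tendsto {Y : Set (Ω →ₘ[μ] ℝ)}
    (hY : OrderClosedIn X Y) (hYX : Y ⊆ X) {g : ℕ → Ω →ₘ[μ] ℝ} {x : Ω →ₘ[μ] ℝ}
    (hg : ∀ n, g n ∈ Y) (hx : x ∈ X) (hmono : Monotone g)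
    (hlim : ∀ᵐ ω ∂μ, Tendsto (fun n => g n ω) atTop (𝓝 (x ω))) : x ∈ Y :=
  hY (ULift ℕ) inferInstance inferInstance ⟨⟨0⟩⟩ _ x (fun n => hg n.down) hx
    (orderConvNetIn_of_monotone_of_ae_tendsto (fun n => hYX (hg n)) hx hmono hlim)

noncomputable def rampL0 (f : Ω →ₘ[μ] ℝ) (r : ℝ) (n : ℕ) : Ω →ₘ[μ] ℝ :=
  ((n : ℝ) • ((f - r • 1) ⊔ 0)) ⊓ 1

theorem rampL0_mem {Y : Submodule ℝ (Ω →ₘ[μ] ℝ)} (hY : ∀ y ∈ Y, |y| ∈ Y)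
    (h1 : (1 : Ω →ₘ[μ] ℝ) ∈ Y) {f : Ω →ₘ[μ] ℝ} (hf : f ∈ Y) (r : ℝ) (n : ℕ) :
    rampL0 f r n ∈ Y :=
  Y.inf_mem_of_forall_abs_mem hY (Y.smul_mem _ <|
    Y.sup_mem_of_forall_abs_mem hY (Y.sub_mem hf (Y.smul_mem r h1)) Y.zero_mem) h1

theorem coeFn_rampL0 (f : Ω →ₘ[μ] ℝ) (r : ℝ) (n : ℕ) :
    rampL0 f r n =ᵐ[μ] fun ω => min (n * max (f ω - r) 0) 1 := by
  filter_upwards [AEEqFun.coeFn_inf ((n : ℝ) • ((f - r • 1) ⊔ 0)) 1,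
    AEEqFun.coeFn_smul (n : ℝ) ((f - r • 1) ⊔ 0), AEEqFun.coeFn_sup (f - r • 1) 0,
    AEEqFun.coeFn_sub f (r • 1), AEEqFun.coeFn_smul r (1 : Ω →ₘ[μ] ℝ),
    AEEqFun.coeFn_zero (β := ℝ), AEEqFun.coeFn_one (β := ℝ)] with ω h₁ h₂ h₃ h₄ h₅ h₆ h₇
  simp [rampL0, h₁, h₂, h₃, h₄, h₅, h₆, h₇]

theorem monotone_rampL0 (f : Ω →ₘ[μ] ℝ) (r : ℝ) : Monotone (rampL0 f r) := by
  intro n m hnm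
  rw [← AEEqFun.coeFn_le]
  filter_upwards [coeFn_rampL0 f r n, coeFn_rampL0 f r m] with ω hn hm
  rw [hn, hm]
  gcongr

theorem ae_tendsto_rampL0 (f : Ω →ₘ[μ] ℝ) (r : ℝ) (hA : MeasurableSet {ω | r < f ω}) :
    ∀ᵐ ω ∂μ, Tendsto (fun n => rampL0 f r n ω) atTop (𝓝 (chiL0 μ _ hA ω)) := by
  filter_upwards [ae_all_iff.2 (coeFn_rampL0 f r), coeFn_chiL0 _ hA] with ω hramp hχ
  simp_rw [hramp, hχ, Set.indicator_apply]
  simpa only [sub_pos, Set.mem_ofPred_eq, Pi.one_apply] using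
    tendsto_min_natCast_mul_max_zero_one (f ω - r)

end L0

theorem mem_measurable_wrt_indicator_sigmaAlgebra_general
    {m0 : MeasurableSpace Ω} {μ : Measure Ω}
    (X : Submodule ℝ (Ω →ₘ[μ] ℝ)) (hX : IsIdealL0 X)
    (Y : Submodule ℝ (Ω →ₘ[μ] ℝ)) (hYX : (Y : Set (Ω →ₘ[μ] ℝ)) ⊆ X)
    (hsub : ∀ y ∈ Y, |y| ∈ Y) (h1 : (1 : Ω →ₘ[μ] ℝ) ∈ Y)
    (hclosed : OrderClosedIn X (Y : Set (Ω →ₘ[μ] ℝ)))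
    (f : Ω →ₘ[μ] ℝ) (hf : f ∈ Y) :
    Measurable[MeasurableSpace.generateFrom
        {A : Set Ω | ∃ h : MeasurableSet A, chiL0 μ A h ∈ Y}] (⇑f) ∧
      ∀ r : ℝ, ∃ h : MeasurableSet {ω | r < f ω}, chiL0 μ {ω | r < f ω} h ∈ Y := by
  have hlevel : ∀ r : ℝ, ∃ h : MeasurableSet {ω | r < f ω}, chiL0 μ {ω | r < f ω} h ∈ Y := by
    intro r
    have hA : MeasurableSet {ω | r < f ω} :=
      measurableSet_lt measurable_const f.stronglyMeasurable.measurable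
    exact ⟨hA, hclosed.mem_of_monotone_of_ae_tendsto hYX (rampL0_mem hsub h1 hf r)
      (hX.chiL0_mem (hYX h1) _ hA) (monotone_rampL0 f r) (ae_tendsto_rampL0 f r hA)⟩
  refine ⟨?_, hlevel⟩
  exact measurable_of_Ioi fun r => MeasurableSpace.measurableSet_generateFrom (hlevel r)

/-- If `Y` is an order closed sublattice of an ideal `X` of `L⁰` with `1 ∈ Y`,
then every `f ∈ Y` is measurable with respect to the σ-algebra
`G = {A ∈ Σ : χ_A ∈ Y}`; in particular `{f > r} ∈ G` for every real `r`. -/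
theorem mem_measurable_wrt_indicator_sigmaAlgebra
    {m0 : MeasurableSpace Ω} {μ : Measure Ω} [IsProbabilityMeasure μ]
    (X : Submodule ℝ (Ω →ₘ[μ] ℝ)) (hX : IsIdealL0 X)
    (Y : Submodule ℝ (Ω →ₘ[μ] ℝ)) (hYX : (Y : Set (Ω →ₘ[μ] ℝ)) ⊆ X)
    (hsub : ∀ y ∈ Y, |y| ∈ Y) (h1 : (1 : Ω →ₘ[μ] ℝ) ∈ Y)
    (hclosed : OrderClosedIn X (Y : Set (Ω →ₘ[μ] ℝ)))
    (f : Ω →ₘ[μ] ℝ) (hf : f ∈ Y) :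
    Measurable[MeasurableSpace.generateFrom
        {A : Set Ω | ∃ h : MeasurableSet A, chiL0 μ A h ∈ Y}] (⇑f) ∧
      ∀ r : ℝ, ∃ h : MeasurableSet {ω | r < f ω}, chiL0 μ {ω | r < f ω} h ∈ Y :=
  mem_measurable_wrt_indicator_sigmaAlgebra_general (m0 := m0) X hX Y hYX hsub h1 hclosed f hf
end
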